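/- With G, C1, C2, α_1, α_2 as in the context (in particular G has no universal vertex), let k be a positive integer. If α_1 + α_2 = 2 (equivalently α_1 = α_2 = 1) and |C1| ≥ k and |C2| ≥ k, then G has a k-tuple dominating set and γ×k(G) = 2k. -/
import Mathlib


open Set

/-- The closed neighborhood `N[v]` of a vertex `v`: `v` together with its neighbors. -/
def closedNbhd {V : Type*} (G : SimpleGraph V) (v : V) : Set V :=
  insert v {w | G.Adj v w}

/-- `D` is a `k`-tuple dominating set of `G`: every vertex has at least `k` members of `D`
in its closed neighborhood. -/
def IsKTupleDomSet {V : Type*} (G : SimpleGraph V) (k : ℕ) (D : Set V) : Prop :=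
  ∀ v : V, k ≤ (closedNbhd G v ∩ D).ncard

/-- `γ×k(G)`: the minimum cardinality of a `k`-tuple dominating set of `G`. -/
noncomputable def gammaTuple {V : Type*} (G : SimpleGraph V) (k : ℕ) : ℕ :=
  sInf {n | ∃ D : Set V, IsKTupleDomSet G k D ∧ D.ncard = n}

/-- A vertex is universal if its closed neighborhood is the whole vertex set. -/
def IsUniversalVertex {V : Type*} (G : SimpleGraph V) (u : V) : Prop :=
  closedNbhd G u = Set.univ

/-- The non-neighbor set `N̄(v) = V \ N[v]`. -/
def nonNbhd {V : Type*} (G : SimpleGraph V) (v : V) : Set V :=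
  (closedNbhd G v)ᶜ

/-- `S` is a stable set of the auxiliary interval graph `H_i`: the non-neighbor sets of the
vertices of `S` are pairwise disjoint. -/
def IsC0PStable {V : Type*} (G : SimpleGraph V) (S : Set V) : Prop :=
  S.Pairwise fun u w => Disjoint (nonNbhd G u) (nonNbhd G w)

/-- Symmetry of closed neighborhoods. -/
lemma mem_closedNbhd_comm {V : Type*} (G : SimpleGraph V) {u v : V} :
    u ∈ closedNbhd G v ↔ v ∈ closedNbhd G u := by
  simp only [closedNbhd, Set.mem_insert_iff, Set.mem_setOf_eq]
  constructor
  · rintro (rfl | h); · exact Or.inl rfl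
    · exact Or.inr h.symm
  · rintro (rfl | h); · exact Or.inl rfl
    · exact Or.inr h.symm

/-- Helly-type lemma: pairwise intersecting interval non-neighborhoods have a common point. -/
lemma helly_common {V : Type*} [Fintype V] [LinearOrder V] (G : SimpleGraph V)
    (C1 C2 : Set V)
    (hsub : ∀ v ∈ C1, nonNbhd G v ⊆ C2)
    (hneS : ∀ v ∈ C1, (nonNbhd G v).Nonempty)
    (hintv : ∀ v ∈ C1, ∀ a ∈ C2, ∀ b ∈ C2, ∀ c ∈ C2, a ≤ b → b ≤ c →
      a ∈ nonNbhd G v → c ∈ nonNbhd G v → b ∈ nonNbhd G v)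
    (hpair : ∀ u ∈ C1, ∀ v ∈ C1, ¬ Disjoint (nonNbhd G u) (nonNbhd G v))
    (hne1 : C1.Nonempty) :
    ∃ x ∈ C2, ∀ v ∈ C1, x ∈ nonNbhd G v := by
  have H : ∀ v : V, ∃ m : V, v ∈ C1 →
      m ∈ nonNbhd G v ∧ ∀ b ∈ nonNbhd G v, b ≤ m := by
    intro v
    by_cases hv : v ∈ C1
    · obtain ⟨m, hm1, hm2⟩ :=
        Set.exists_max_image (nonNbhd G v) id (Set.toFinite _) (hneS v hv)
      exact ⟨m, fun _ => ⟨hm1, hm2⟩⟩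
    · exact ⟨v, fun hc => absurd hc hv⟩
  choose g hg using H
  obtain ⟨v0, hv0, hmin⟩ := Set.exists_min_image C1 g C1.toFinite hne1
  refine ⟨g v0, hsub v0 hv0 (hg v0 hv0).1, ?_⟩
  intro v hv
  obtain ⟨y, hy1, hy2⟩ := Set.not_disjoint_iff.1 (hpair v hv v0 hv0)
  exact hintv v hv y (hsub v hv hy1) (g v0) (hsub v0 hv0 (hg v0 hv0).1)
    (g v) (hsub v hv (hg v hv).1) ((hg v0 hv0).2 y hy2) (hmin v hv) hy1 (hg v hv).1

/-- in a C0P-graph with no universal vertices, if `α1 + α2 = 2`, `|C1| ≥ k` and `|C2| ≥ k` for a positive integer `k`, then `G` has a `k`-tuple dominating set and `γ×k(G) = 2k`. -/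
theorem stmt17 {V : Type*} [Fintype V] [LinearOrder V] (G : SimpleGraph V) (C1 C2 : Set V)
    (hd12 : Disjoint C1 C2) (hunion : C1 ∪ C2 = Set.univ)
    (hne1 : C1.Nonempty) (hne2 : C2.Nonempty)
    (hcl1 : G.IsClique C1) (hcl2 : G.IsClique C2)
    (hnouniv : ∀ v : V, ¬ IsUniversalVertex G v)
    (hint1 : ∀ v ∈ C1, (nonNbhd G v).Nonempty ∧
      ∀ a ∈ C2, ∀ b ∈ C2, ∀ c ∈ C2, a ≤ b → b ≤ c →
        a ∈ nonNbhd G v → c ∈ nonNbhd G v → b ∈ nonNbhd G v)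
    (hint2 : ∀ v ∈ C2, (nonNbhd G v).Nonempty ∧
      ∀ a ∈ C1, ∀ b ∈ C1, ∀ c ∈ C1, a ≤ b → b ≤ c →
        a ∈ nonNbhd G v → c ∈ nonNbhd G v → b ∈ nonNbhd G v)
    (α1 α2 : ℕ)
    (hα1 : IsGreatest {n | ∃ S : Set V, S ⊆ C1 ∧ IsC0PStable G S ∧ S.ncard = n} α1)
    (hα2 : IsGreatest {n | ∃ S : Set V, S ⊆ C2 ∧ IsC0PStable G S ∧ S.ncard = n} α2)
    (k : ℕ) (hk : 0 < k) (h : α1 + α2 = 2) (hc1 : k ≤ C1.ncard) (hc2 : k ≤ C2.ncard) :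
    (∃ D : Set V, IsKTupleDomSet G k D) ∧ gammaTuple G k = 2 * k := by
  classical
  -- clique vertices dominate their own clique
  have hcliq : ∀ (C : Set V), G.IsClique C → ∀ v ∈ C, ∀ a ∈ C, a ∈ closedNbhd G v := by
    intro C hcl v hv a ha
    by_cases hav : a = v
    · subst hav; exact Set.mem_insert a _
    · exact Set.mem_insert_of_mem _ (hcl hv ha (fun hh => hav hh.symm))
  -- non-neighborhoods lie in the other clique
  have hsub1 : ∀ v ∈ C1, nonNbhd G v ⊆ C2 := by
    intro v hv w hw
    rcases (Set.mem_union w C1 C2).1 (hunion ▸ Set.mem_univ w) with hw1 | hw2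
    · exact absurd (hcliq C1 hcl1 v hv w hw1) hw
    · exact hw2
  have hsub2 : ∀ v ∈ C2, nonNbhd G v ⊆ C1 := by
    intro v hv w hw
    rcases (Set.mem_union w C1 C2).1 (hunion ▸ Set.mem_univ w) with hw1 | hw2
    · exact hw1
    · exact absurd (hcliq C2 hcl2 v hv w hw2) hw
  -- α1 = α2 = 1
  have hge1 : ∀ (C : Set V) (α : ℕ), C.Nonempty →
      IsGreatest {n | ∃ S : Set V, S ⊆ C ∧ IsC0PStable G S ∧ S.ncard = n} α → 1 ≤ α := by
    rintro C α ⟨x, hx⟩ hα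
    exact hα.2 ⟨{x}, Set.singleton_subset_iff.2 hx, Set.pairwise_singleton _ _,
      Set.ncard_singleton x⟩
  have ha1 : α1 = 1 := by
    have := hge1 C1 α1 hne1 hα1; have := hge1 C2 α2 hne2 hα2; omega
  have ha2 : α2 = 1 := by
    have := hge1 C1 α1 hne1 hα1; have := hge1 C2 α2 hne2 hα2; omega
  -- pairwise intersecting non-neighborhoods
  have hpairgen : ∀ (C : Set V) (α : ℕ),
      IsGreatest {n | ∃ S : Set V, S ⊆ C ∧ IsC0PStable G S ∧ S.ncard = n} α → α = 1 →
      (∀ v ∈ C, (nonNbhd G v).Nonempty) →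
      ∀ u ∈ C, ∀ v ∈ C, ¬ Disjoint (nonNbhd G u) (nonNbhd G v) := by
    intro C α hα hα1' hnem u hu v hv hd
    by_cases huv : u = v
    · subst huv
      obtain ⟨x, hx⟩ := hnem u hu
      exact Set.disjoint_left.1 hd hx hx
    · have hst : IsC0PStable G {u, v} := by
        intro x hx y hy hxy
        simp only [Set.mem_insert_iff, Set.mem_singleton_iff] at hx hy
        rcases hx with rfl | rfl <;> rcases hy with rfl | rfl
        · exact absurd rfl hxy
        · exact hd
        · exact hd.symm
        · exact absurd rfl hxy
      have h2 : (2 : ℕ) ≤ α := hα.2 ⟨{u, v}, by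
        simp only [Set.insert_subset_iff, Set.singleton_subset_iff]
        exact ⟨hu, hv⟩, hst, Set.ncard_pair huv⟩
      omega
  -- common non-neighbors via Helly
  obtain ⟨x2, hx2C2, hx2⟩ := helly_common G C1 C2 hsub1 (fun v hv => (hint1 v hv).1)
    (fun v hv => (hint1 v hv).2) (hpairgen C1 α1 hα1 ha1 (fun v hv => (hint1 v hv).1)) hne1
  obtain ⟨x1, hx1C1, hx1⟩ := helly_common G C2 C1 hsub2 (fun v hv => (hint2 v hv).1)
    (fun v hv => (hint2 v hv).2) (hpairgen C2 α2 hα2 ha2 (fun v hv => (hint2 v hv).1)) hne2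
  -- lower bound
  have hlower : ∀ D : Set V, IsKTupleDomSet G k D → 2 * k ≤ D.ncard := by
    intro D hD
    have hs2 : closedNbhd G x2 ∩ D ⊆ C2 ∩ D := by
      rintro w ⟨hw1, hw2⟩
      refine ⟨?_, hw2⟩
      rcases (Set.mem_union w C1 C2).1 (hunion ▸ Set.mem_univ w) with hwC1 | hwC2
      · exact absurd ((mem_closedNbhd_comm G).1 hw1) (hx2 w hwC1)
      · exact hwC2
    have hs1 : closedNbhd G x1 ∩ D ⊆ C1 ∩ D := by
      rintro w ⟨hw1, hw2⟩
      refine ⟨?_, hw2⟩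
      rcases (Set.mem_union w C1 C2).1 (hunion ▸ Set.mem_univ w) with hwC1 | hwC2
      · exact hwC1
      · exact absurd ((mem_closedNbhd_comm G).1 hw1) (hx1 w hwC2)
    have hk2 : k ≤ (C2 ∩ D).ncard :=
      le_trans (hD x2) (Set.ncard_le_ncard hs2 (Set.toFinite _))
    have hk1 : k ≤ (C1 ∩ D).ncard :=
      le_trans (hD x1) (Set.ncard_le_ncard hs1 (Set.toFinite _))
    have hDeq : (C1 ∩ D) ∪ (C2 ∩ D) = D := by
      rw [← Set.union_inter_distrib_right, hunion, Set.univ_inter]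
    have hdisj : Disjoint (C1 ∩ D) (C2 ∩ D) :=
      hd12.mono Set.inter_subset_left Set.inter_subset_left
    have := Set.ncard_union_eq hdisj (Set.toFinite _) (Set.toFinite _)
    rw [hDeq] at this
    omega
  -- construction of a 2k-element k-tuple dominating set
  obtain ⟨A, hA, hAcard⟩ := Set.exists_subset_card_eq hc1
  obtain ⟨B, hB, hBcard⟩ := Set.exists_subset_card_eq hc2
  have hdom : IsKTupleDomSet G k (A ∪ B) := by
    intro v
    rcases (Set.mem_union v C1 C2).1 (hunion ▸ Set.mem_univ v) with hv | hv
    · have : A ⊆ closedNbhd G v ∩ (A ∪ B) := fun a ha =>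
        ⟨hcliq C1 hcl1 v hv a (hA ha), Or.inl ha⟩
      calc k = A.ncard := hAcard.symm
        _ ≤ _ := Set.ncard_le_ncard this (Set.toFinite _)
    · have : B ⊆ closedNbhd G v ∩ (A ∪ B) := fun b hb =>
        ⟨hcliq C2 hcl2 v hv b (hB hb), Or.inr hb⟩
      calc k = B.ncard := hBcard.symm
        _ ≤ _ := Set.ncard_le_ncard this (Set.toFinite _)
  have hcard : (A ∪ B).ncard = 2 * k := by
    rw [Set.ncard_union_eq (hd12.mono hA hB) (Set.toFinite _) (Set.toFinite _),
      hAcard, hBcard]; ring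
  refine ⟨⟨A ∪ B, hdom⟩, ?_⟩
  have hmem : 2 * k ∈ {n | ∃ D : Set V, IsKTupleDomSet G k D ∧ D.ncard = n} :=
    ⟨A ∪ B, hdom, hcard⟩
  refine le_antisymm (Nat.sInf_le hmem) (le_csInf ⟨_, hmem⟩ ?_)
  rintro n ⟨D, hD, rfl⟩
  exact hlower D hD
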